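/- arXiv:1403.4613 — 3 statements merged into one kernel-verified Lean document; each statement's English description precedes it below -/
import Mathlib

section
/- Let {F_i}_{i∈Z^d} be a commuting filtration on a probability space (Ω,F,P). Then the one-coordinate projection operators commute: for all ℓ₁,ℓ₂ ∈ Z and q₁,q₂ ∈ {1,…,d} with q₁ ≠ q₂, and every f ∈ L²(F), one has P^(q₁)_{ℓ₁}(P^(q₂)_{ℓ₂} f) = P^(q₂)_{ℓ₂}(P^(q₁)_{ℓ₁} f) almost surely; consequently the operators {P_j}_{j∈Z^d} also pairwise commute. -/
open MeasureTheory ProbabilityTheory Filter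
open scoped ENNReal NNReal

noncomputable section

/-- The σ-algebra `F^(q)_ℓ` generated by all `F i` with `i q ≤ ℓ`. -/
def sigmaQ {Ω : Type} {d : ℕ} (F : (Fin d → ℤ) → MeasurableSpace Ω)
    (q : Fin d) (l : ℤ) : MeasurableSpace Ω :=
  ⨆ i : Fin d → ℤ, ⨆ _ : i q ≤ l, F i

/-- The one-coordinate projection operator `P^(q)_ℓ f = E(f | F^(q)_ℓ) − E(f | F^(q)_{ℓ−1})`. -/
def projQ {Ω : Type} [MeasurableSpace Ω] {d : ℕ} (P : Measure Ω)
    (F : (Fin d → ℤ) → MeasurableSpace Ω) (q : Fin d) (l : ℤ) (f : Ω → ℝ) : Ω → ℝ :=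
  P[f | sigmaQ F q l] - P[f | sigmaQ F q (l - 1)]

/-- The projection operator `P_j = P^(1)_{j 1} ∘ ⋯ ∘ P^(d)_{j d}`. -/
def projP {Ω : Type} [MeasurableSpace Ω] {d : ℕ} (P : Measure Ω)
    (F : (Fin d → ℤ) → MeasurableSpace Ω) (j : Fin d → ℤ) (f : Ω → ℝ) : Ω → ℝ :=
  (List.finRange d).foldr (fun q g => projQ P F q (j q) g) f

/-- `F` is a commuting filtration of sub-σ-algebras of the ambient σ-algebra:
it is monotone and conditional expectations of bounded `F ℓ`-measurable random variables
satisfy `E(Y | F k) = E(Y | F (k ⊓ ℓ))` a.s. -/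
def IsCommutingFiltration {Ω : Type} [m0 : MeasurableSpace Ω] (P : Measure Ω) {d : ℕ}
    (F : (Fin d → ℤ) → MeasurableSpace Ω) : Prop :=
  (∀ i, F i ≤ m0) ∧ (∀ i j : Fin d → ℤ, i ≤ j → F i ≤ F j) ∧
    ∀ (k l : Fin d → ℤ) (Y : Ω → ℝ), (∃ C, ∀ ω, |Y ω| ≤ C) → Measurable[F l] Y →
      P[Y | F k] =ᵐ[P] P[Y | F (k ⊓ l)]

end

/-!
By Lévy's upward theorem, `F^(q)_ℓ` is the increasing limit of the `F i` with `i q = ℓ` and all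
other coordinates equal to `n → ∞`. The commuting property, extended from bounded to integrable
variables by truncation, gives `E(E(f | F j) | F k) = E(f | F (j ⊓ k))`. Passing to the limit
twice (conditional expectation is an L¹ contraction) shows that for `q₁ ≠ q₂` the iterated
conditional expectation `E(E(f | F^(q₁)_ℓ₁) | F^(q₂)_ℓ₂)` is the conditional expectation given
`⋁ₙ F i` over the indices with `i q₁ = ℓ₁`, `i q₂ = ℓ₂`, other coordinates `n`, which is
symmetric in the two coordinates; for `q₁ = q₂` the two σ-algebras are nested. The projections
are differences of such iterated conditional expectations, so they commute, and hence so do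
their compositions `P_j`.
-/

open scoped Topology

section General

variable {Ω : Type*} {m m0 : MeasurableSpace Ω} {μ : Measure Ω}

lemma tendsto_eLpNorm_condExp_sub_of_tendsto {ι : Type*} {l : Filter ι} {f : ι → Ω → ℝ}
    {g : Ω → ℝ} (hf : ∀ i, Integrable (f i) μ) (hg : Integrable g μ)
    (hfg : Tendsto (fun i => eLpNorm (f i - g) 1 μ) l (𝓝 0)) :
    Tendsto (fun i => eLpNorm (μ[f i | m] - μ[g | m]) 1 μ) l (𝓝 0) := by
  refine tendsto_of_tendsto_of_tendsto_of_le_of_le tendsto_const_nhds hfg (fun _ => zero_le)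
    fun i => ?_
  calc eLpNorm (μ[f i | m] - μ[g | m]) 1 μ = eLpNorm (μ[f i - g | m]) 1 μ :=
        eLpNorm_congr_ae (condExp_sub (hf i) hg m).symm
    _ ≤ eLpNorm (f i - g) 1 μ := eLpNorm_condExp_le_eLpNorm _ le_rfl

lemma ae_eq_of_tendsto_eLpNorm_one {u v : ℕ → Ω → ℝ} {a b : Ω → ℝ}
    (hu : ∀ n, AEStronglyMeasurable (u n) μ) (hv : ∀ n, AEStronglyMeasurable (v n) μ)
    (ha : AEStronglyMeasurable a μ) (hb : AEStronglyMeasurable b μ)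
    (huv : ∀ᶠ n in atTop, u n =ᵐ[μ] v n)
    (hua : Tendsto (fun n => eLpNorm (u n - a) 1 μ) atTop (𝓝 0))
    (hvb : Tendsto (fun n => eLpNorm (v n - b) 1 μ) atTop (𝓝 0)) :
    a =ᵐ[μ] b :=
  tendstoInMeasure_ae_unique
    ((tendstoInMeasure_of_tendsto_eLpNorm one_ne_zero hu ha hua).congr' huv EventuallyEq.rfl)
    (tendstoInMeasure_of_tendsto_eLpNorm one_ne_zero hv hb hvb)

lemma tendsto_eLpNorm_condExp_iSup [IsFiniteMeasure μ] {ℱ : ℕ → MeasurableSpace Ω}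
    (hmono : Monotone ℱ) (hle : ∀ n, ℱ n ≤ m0) (g : Ω → ℝ) :
    Tendsto (fun n => eLpNorm (μ[g | ℱ n] - μ[g | ⨆ n, ℱ n]) 1 μ) atTop (𝓝 0) :=
  tendsto_eLpNorm_condExp (ℱ := ⟨ℱ, hmono, hle⟩) g

lemma tendsto_eLpNorm_truncation_sub {f : Ω → ℝ} (hf : Integrable f μ) :
    Tendsto (fun n : ℕ => eLpNorm (truncation f n - f) 1 μ) atTop (𝓝 0) := by
  have hlim : ∀ x, Tendsto (fun n : ℕ => truncation f n x) atTop (𝓝 (f x)) := fun x =>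
    tendsto_const_nhds.congr' <| (eventually_gt_atTop ⌈|f x|⌉₊).mono fun n hn =>
      (truncation_eq_self ((Nat.le_ceil _).trans_lt (by exact_mod_cast hn))).symm
  have := tendsto_lintegral_norm_of_dominated_convergence (fun _ => hf.1.truncation)
    hf.norm.2 (fun n => .of_forall fun x => by simpa using abs_truncation_le_abs_self f n x)
    (.of_forall hlim)
  simpa only [eLpNorm_one_eq_lintegral_enorm, ofReal_norm, Pi.sub_apply] using this

lemma condExp_condExp_comm_of_le {m₁ m₂ : MeasurableSpace Ω} [IsFiniteMeasure μ]
    (h₁₂ : m₁ ≤ m₂) (h₂ : m₂ ≤ m0) (f : Ω → ℝ) :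
    μ[μ[f | m₁] | m₂] =ᵐ[μ] μ[μ[f | m₂] | m₁] := by
  rw [condExp_of_stronglyMeasurable h₂ (stronglyMeasurable_condExp.mono h₁₂) integrable_condExp]
  exact (condExp_condExp_of_le h₁₂ h₂).symm

lemma List.Perm.foldr_ae_eq {ι : Type*} {T : ι → (Ω → ℝ) → Ω → ℝ}
    (hcongr : ∀ i {f g}, f =ᵐ[μ] g → T i f =ᵐ[μ] T i g)
    (hcomm : ∀ i j f, T i (T j f) =ᵐ[μ] T j (T i f)) {L L' : List ι} (h : L.Perm L')
    (f : Ω → ℝ) : L.foldr T f =ᵐ[μ] L'.foldr T f := by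
  induction h with
  | nil => rfl
  | cons i _ ih => exact hcongr i ih
  | swap i j L => exact hcomm j i _
  | trans _ _ ih₁ ih₂ => exact ih₁.trans ih₂

end General

namespace IsCommutingFiltration

variable {Ω : Type} [m0 : MeasurableSpace Ω] {P : Measure Ω}
  {d : ℕ} {F : (Fin d → ℤ) → MeasurableSpace Ω}

lemma le (hF : IsCommutingFiltration P F) (i : Fin d → ℤ) : F i ≤ m0 := hF.1 i

lemma monotone (hF : IsCommutingFiltration P F) : Monotone F := fun i j => hF.2.1 i j

lemma condExp_eq_condExp_inf [IsFiniteMeasure P] (hF : IsCommutingFiltration P F)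
    (k l : Fin d → ℤ) {Y : Ω → ℝ} (hYi : Integrable Y P) (hYm : Measurable[F l] Y) :
    P[Y | F k] =ᵐ[P] P[Y | F (k ⊓ l)] := by
  have hint : ∀ n : ℕ, Integrable (truncation Y n) P := fun n => hYi.1.integrable_truncation
  have hbdd : ∀ n : ℕ, ∃ C, ∀ x, |truncation Y n x| ≤ C := fun n =>
    ⟨n, fun x => (abs_truncation_le_bound Y n x).trans_eq (Nat.abs_cast n)⟩
  have hmeas : ∀ n : ℕ, Measurable[F l] (truncation Y n) := fun _ =>
    (measurable_id.indicator measurableSet_Ioc).comp hYm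
  have hconv := tendsto_eLpNorm_truncation_sub hYi
  exact ae_eq_of_tendsto_eLpNorm_one (fun _ => integrable_condExp.1)
    (fun _ => integrable_condExp.1) integrable_condExp.1 integrable_condExp.1
    (.of_forall fun n => hF.2.2 k l _ (hbdd n) (hmeas n))
    (tendsto_eLpNorm_condExp_sub_of_tendsto hint hYi hconv)
    (tendsto_eLpNorm_condExp_sub_of_tendsto hint hYi hconv)

lemma condExp_condExp [IsFiniteMeasure P] (hF : IsCommutingFiltration P F) (j k : Fin d → ℤ)
    (f : Ω → ℝ) : P[P[f | F j] | F k] =ᵐ[P] P[f | F (k ⊓ j)] :=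
  (hF.condExp_eq_condExp_inf k j integrable_condExp stronglyMeasurable_condExp.measurable).trans
    (condExp_condExp_of_le (hF.monotone inf_le_right) (hF.le j))

end IsCommutingFiltration

section SigmaQ

variable {Ω : Type} {d : ℕ} {F : (Fin d → ℤ) → MeasurableSpace Ω}

def cornerIndex (q : Fin d) (l : ℤ) (n : ℕ) : Fin d → ℤ :=
  Function.update (fun _ => (n : ℤ)) q l

lemma monotone_cornerIndex (q : Fin d) (l : ℤ) : Monotone (cornerIndex q l) := fun _ _ h =>
  update_le_update_iff.2 ⟨le_rfl, fun _ _ => Nat.cast_le.2 h⟩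

lemma monotone_update_cornerIndex (q₁ q₂ : Fin d) (l₁ l₂ : ℤ) :
    Monotone fun n => Function.update (cornerIndex q₁ l₁ n) q₂ l₂ := fun _ _ h =>
  update_le_update_iff.2 ⟨le_rfl, fun _ _ => monotone_cornerIndex q₁ l₁ h _⟩

lemma cornerIndex_inf_cornerIndex {q₁ q₂ : Fin d} (hq : q₁ ≠ q₂) {l₁ l₂ : ℤ} {n m : ℕ}
    (hn : l₁ ≤ n) (hnm : n ≤ m) (hm : l₂ ≤ m) :
    cornerIndex q₂ l₂ n ⊓ cornerIndex q₁ l₁ m = Function.update (cornerIndex q₁ l₁ n) q₂ l₂ := by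
  have hnm : (n : ℤ) ≤ m := Nat.cast_le.2 hnm
  funext p
  simp only [cornerIndex, Pi.inf_apply, Function.update_apply]
  split_ifs with h₂ h₁ <;> subst_vars <;> first | exact absurd rfl hq | omega

lemma le_sigmaQ {q : Fin d} {l : ℤ} {i : Fin d → ℤ} (h : i q ≤ l) : F i ≤ sigmaQ F q l :=
  le_iSup₂_of_le i h le_rfl

lemma sigmaQ_le [m0 : MeasurableSpace Ω] (hF : ∀ i, F i ≤ m0) (q : Fin d) (l : ℤ) :
    sigmaQ F q l ≤ m0 :=
  iSup₂_le fun i _ => hF i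

lemma sigmaQ_mono (q : Fin d) : Monotone (sigmaQ F q) := fun _ _ h =>
  iSup₂_le fun _ hi => le_sigmaQ (hi.trans h)

lemma iSup_cornerIndex (hF : Monotone F) (q : Fin d) (l : ℤ) :
    ⨆ n : ℕ, F (cornerIndex q l n) = sigmaQ F q l := by
  refine le_antisymm (iSup_le fun n => le_sigmaQ (by simp [cornerIndex])) ?_
  refine iSup₂_le fun i hi => le_iSup_of_le (Finset.univ.sup fun p => (i p).toNat) (hF ?_)
  refine le_update_iff.2 ⟨hi, fun p _ => (Int.self_le_toNat (i p)).trans ?_⟩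
  exact Nat.cast_le.2 (Finset.le_sup (f := fun p => (i p).toNat) (Finset.mem_univ p))

end SigmaQ

namespace IsCommutingFiltration

variable {Ω : Type} [m0 : MeasurableSpace Ω] {P : Measure Ω} [IsFiniteMeasure P]
  {d : ℕ} {F : (Fin d → ℤ) → MeasurableSpace Ω}

lemma tendsto_eLpNorm_condExp_cornerIndex (hF : IsCommutingFiltration P F) (q : Fin d) (l : ℤ)
    (f : Ω → ℝ) :
    Tendsto (fun n => eLpNorm (P[f | F (cornerIndex q l n)] - P[f | sigmaQ F q l]) 1 P)
      atTop (𝓝 0) := by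
  have := tendsto_eLpNorm_condExp_iSup (μ := P) (ℱ := fun n => F (cornerIndex q l n))
    (fun _ _ h => hF.monotone (monotone_cornerIndex q l h)) (fun _ => hF.le _) f
  rwa [iSup_cornerIndex hF.monotone] at this

lemma condExp_cornerIndex_condExp_sigmaQ (hF : IsCommutingFiltration P F) {q₁ q₂ : Fin d}
    (hq : q₁ ≠ q₂) {l₁ : ℤ} (l₂ : ℤ) {n : ℕ} (hn : l₁ ≤ n) (f : Ω → ℝ) :
    P[P[f | sigmaQ F q₁ l₁] | F (cornerIndex q₂ l₂ n)]
      =ᵐ[P] P[f | F (Function.update (cornerIndex q₁ l₁ n) q₂ l₂)] := by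
  -- Conditioning the Lévy approximants of `P[f | sigmaQ F q₁ l₁]` on `F (cornerIndex q₂ l₂ n)`
  -- gives a sequence that is eventually constant.
  have hm : ∀ᶠ m : ℕ in atTop, n ≤ m ∧ l₂ ≤ m :=
    (eventually_ge_atTop n).and (tendsto_natCast_atTop_atTop.eventually_ge_atTop l₂)
  refine ae_eq_of_tendsto_eLpNorm_one (u := fun m => P[P[f | F (cornerIndex q₁ l₁ m)] | _])
    (v := fun _ => P[f | F (Function.update (cornerIndex q₁ l₁ n) q₂ l₂)])
    (fun _ => integrable_condExp.1) (fun _ => integrable_condExp.1) integrable_condExp.1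
    integrable_condExp.1 (hm.mono fun m hm => ?_)
    (tendsto_eLpNorm_condExp_sub_of_tendsto (fun _ => integrable_condExp) integrable_condExp
      (hF.tendsto_eLpNorm_condExp_cornerIndex q₁ l₁ f))
    (by simp only [sub_self, eLpNorm_zero, tendsto_const_nhds])
  rw [← cornerIndex_inf_cornerIndex hq hn hm.1 hm.2]
  exact hF.condExp_condExp _ _ f

lemma condExp_sigmaQ_condExp_sigmaQ (hF : IsCommutingFiltration P F) {q₁ q₂ : Fin d}
    (hq : q₁ ≠ q₂) (l₁ l₂ : ℤ) (f : Ω → ℝ) :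
    P[P[f | sigmaQ F q₁ l₁] | sigmaQ F q₂ l₂]
      =ᵐ[P] P[f | ⨆ n, F (Function.update (cornerIndex q₁ l₁ n) q₂ l₂)] :=
  ae_eq_of_tendsto_eLpNorm_one (fun _ => integrable_condExp.1)
    (fun _ => integrable_condExp.1) integrable_condExp.1 integrable_condExp.1
    ((tendsto_natCast_atTop_atTop.eventually_ge_atTop l₁).mono fun _ hn =>
      hF.condExp_cornerIndex_condExp_sigmaQ hq l₂ hn f)
    (hF.tendsto_eLpNorm_condExp_cornerIndex q₂ l₂ _)
    (tendsto_eLpNorm_condExp_iSup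
      (ℱ := fun n => F (Function.update (cornerIndex q₁ l₁ n) q₂ l₂))
      (fun _ _ h => hF.monotone (monotone_update_cornerIndex q₁ q₂ l₁ l₂ h))
      (fun _ => hF.le _) f)

lemma condExp_sigmaQ_comm (hF : IsCommutingFiltration P F) (q₁ q₂ : Fin d) (l₁ l₂ : ℤ)
    (f : Ω → ℝ) :
    P[P[f | sigmaQ F q₁ l₁] | sigmaQ F q₂ l₂]
      =ᵐ[P] P[P[f | sigmaQ F q₂ l₂] | sigmaQ F q₁ l₁] := by
  rcases eq_or_ne q₁ q₂ with rfl | hq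
  · rcases le_total l₁ l₂ with h | h
    · exact condExp_condExp_comm_of_le (sigmaQ_mono q₁ h) (sigmaQ_le hF.le q₁ l₂) f
    · exact (condExp_condExp_comm_of_le (sigmaQ_mono q₁ h) (sigmaQ_le hF.le q₁ l₁) f).symm
  · have hsymm : ∀ n, Function.update (cornerIndex q₁ l₁ n) q₂ l₂
        = Function.update (cornerIndex q₂ l₂ n) q₁ l₁ := fun n =>
      Function.update_comm (β := fun _ => ℤ) hq l₁ l₂ _
    refine (hF.condExp_sigmaQ_condExp_sigmaQ hq l₁ l₂ f).trans ?_
    simpa only [hsymm] using (hF.condExp_sigmaQ_condExp_sigmaQ hq.symm l₂ l₁ f).symm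

end IsCommutingFiltration

section Projections

variable {Ω : Type} [m0 : MeasurableSpace Ω] {P : Measure Ω} {d : ℕ}
  {F : (Fin d → ℤ) → MeasurableSpace Ω}

lemma projQ_congr (q : Fin d) (l : ℤ) {f g : Ω → ℝ} (h : f =ᵐ[P] g) :
    projQ P F q l f =ᵐ[P] projQ P F q l g :=
  (condExp_congr_ae h).sub (condExp_congr_ae h)

lemma projQ_projQ (q₁ q₂ : Fin d) (l₁ l₂ : ℤ) (f : Ω → ℝ) :
    projQ P F q₁ l₁ (projQ P F q₂ l₂ f) =ᵐ[P]
      P[P[f | sigmaQ F q₂ l₂] | sigmaQ F q₁ l₁]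
        - P[P[f | sigmaQ F q₂ (l₂ - 1)] | sigmaQ F q₁ l₁]
        - (P[P[f | sigmaQ F q₂ l₂] | sigmaQ F q₁ (l₁ - 1)]
          - P[P[f | sigmaQ F q₂ (l₂ - 1)] | sigmaQ F q₁ (l₁ - 1)]) :=
  (condExp_sub integrable_condExp integrable_condExp _).sub
    (condExp_sub integrable_condExp integrable_condExp _)

lemma projQ_comm [IsFiniteMeasure P] (hF : IsCommutingFiltration P F) (q₁ q₂ : Fin d)
    (l₁ l₂ : ℤ) (f : Ω → ℝ) :
    projQ P F q₁ l₁ (projQ P F q₂ l₂ f) =ᵐ[P] projQ P F q₂ l₂ (projQ P F q₁ l₁ f) := by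
  have hcomm := fun a b => hF.condExp_sigmaQ_comm q₂ q₁ b a f
  filter_upwards [projQ_projQ q₁ q₂ l₁ l₂ f, projQ_projQ q₂ q₁ l₂ l₁ f, hcomm l₁ l₂,
    hcomm l₁ (l₂ - 1), hcomm (l₁ - 1) l₂, hcomm (l₁ - 1) (l₂ - 1)] with ω h₁₂ h₂₁ c₁ c₂ c₃ c₄
  simp only [Pi.sub_apply] at *
  linarith

lemma projP_eq_foldr (j : Fin d → ℤ) (f : Ω → ℝ) :
    projP P F j f
      = ((List.finRange d).map fun q => (q, j q)).foldr (fun p g => projQ P F p.1 p.2 g) f := by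
  simp only [projP, List.foldr_map]

lemma projP_comm [IsFiniteMeasure P] (hF : IsCommutingFiltration P F) (i j : Fin d → ℤ)
    (f : Ω → ℝ) : projP P F i (projP P F j f) =ᵐ[P] projP P F j (projP P F i f) := by
  simp only [projP_eq_foldr, ← List.foldr_append]
  exact List.perm_append_comm.foldr_ae_eq (fun p _ _ h => projQ_congr p.1 p.2 h)
    (fun p p' g => projQ_comm hF p.1 p'.1 p.2 p'.2 g) f

end Projections

theorem statement0_general
    {Ω : Type} [m0 : MeasurableSpace Ω] (P : Measure Ω) [IsProbabilityMeasure P]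
    (d : ℕ)
    (F : (Fin d → ℤ) → MeasurableSpace Ω)
    (hF : IsCommutingFiltration P F) :
    (∀ f : Ω → ℝ, MemLp f 2 P → ∀ (q₁ q₂ : Fin d) (l₁ l₂ : ℤ), q₁ ≠ q₂ →
        projQ P F q₁ l₁ (projQ P F q₂ l₂ f) =ᵐ[P] projQ P F q₂ l₂ (projQ P F q₁ l₁ f)) ∧
      (∀ f : Ω → ℝ, MemLp f 2 P → ∀ i j : Fin d → ℤ,
        projP P F i (projP P F j f) =ᵐ[P] projP P F j (projP P F i f)) :=
  ⟨fun f _ q₁ q₂ l₁ l₂ _ => projQ_comm hF q₁ q₂ l₁ l₂ f, fun f _ i j => projP_comm hF i j f⟩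

/-- For a commuting filtration indexed by `ℤ^d`, the one-coordinate
projection operators commute: for `q₁ ≠ q₂`, `P^(q₁)_{ℓ₁} P^(q₂)_{ℓ₂} f = P^(q₂)_{ℓ₂} P^(q₁)_{ℓ₁} f`
a.s. for every `f ∈ L²`; consequently the operators `P_j`, `j ∈ ℤ^d`, pairwise commute. -/
theorem statement0
    {Ω : Type} [m0 : MeasurableSpace Ω] (P : Measure Ω) [IsProbabilityMeasure P]
    (d : ℕ) (hd : 1 ≤ d)
    (F : (Fin d → ℤ) → MeasurableSpace Ω)
    (hF : IsCommutingFiltration P F) :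
    (∀ f : Ω → ℝ, MemLp f 2 P → ∀ (q₁ q₂ : Fin d) (l₁ l₂ : ℤ), q₁ ≠ q₂ →
        projQ P F q₁ l₁ (projQ P F q₂ l₂ f) =ᵐ[P] projQ P F q₂ l₂ (projQ P F q₁ l₁ f)) ∧
      (∀ f : Ω → ℝ, MemLp f 2 P → ∀ i j : Fin d → ℤ,
        projP P F i (projP P F j f) =ᵐ[P] projP P F j (projP P F i f)) :=
  statement0_general (m0 := m0) P d F hF
end

section
/- (Analytic comparison of series.) Let d ≥ 1 and let (a_n)_{n∈N^d} be nonnegative real numbers. If Σ_{n∈N^d} a_n = ∞, then Σ_{n∈N^d} |n|^{−1/2} ( Σ_{k∈N^d, k ≥ n} a_k² )^{1/2} = ∞, where |n| = n_1⋯n_d and k ≥ n is coordinatewise. Equivalently, finiteness of Σ_{n∈N^d} |n|^{−1/2} (Σ_{k≥n} a_k²)^{1/2} implies Σ_{n∈N^d} a_n < ∞. -/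
open scoped ENNReal

private lemma cs_ofReal {ι : Type*} (s : Finset ι) (a : ι → ℝ) (ha : ∀ i, 0 ≤ a i) :
    (∑ k ∈ s, ENNReal.ofReal (a k)) ^ 2 ≤ (s.card : ℝ≥0∞) * ∑ k ∈ s, ENNReal.ofReal (a k) ^ 2 := by
  have h2 : ∀ k ∈ s, ENNReal.ofReal (a k) ^ 2 = ENNReal.ofReal (a k ^ 2) := fun k _ =>
    (ENNReal.ofReal_pow (ha k) 2).symm
  rw [Finset.sum_congr rfl h2, ← ENNReal.ofReal_sum_of_nonneg (fun i _ => ha i),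
    ← ENNReal.ofReal_pow (Finset.sum_nonneg fun i _ => ha i),
    ← ENNReal.ofReal_sum_of_nonneg (fun i _ => sq_nonneg _),
    ← ENNReal.ofReal_natCast s.card, ← ENNReal.ofReal_mul (Nat.cast_nonneg _)]
  exact ENNReal.ofReal_le_ofReal sq_sum_le_card_mul_sum_sq

private lemma coord_bound (m : ℕ) :
    (2 : ℝ≥0∞)⁻¹ ≤ ∑ j ∈ Finset.Icc (m / 2) m, ((j : ℝ≥0∞) + 2)⁻¹ := by
  have h1 : (Finset.Icc (m / 2) m).card • ((m : ℝ≥0∞) + 2)⁻¹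
      ≤ ∑ j ∈ Finset.Icc (m / 2) m, ((j : ℝ≥0∞) + 2)⁻¹ := by
    apply Finset.card_nsmul_le_sum
    intro x hx
    have hxm : x ≤ m := (Finset.mem_Icc.mp hx).2
    gcongr
  refine le_trans ?_ h1
  rw [Nat.card_Icc, nsmul_eq_mul]
  have hm2 : ((m : ℝ≥0∞) + 2) = ((m + 2 : ℕ) : ℝ≥0∞) := by push_cast; ring
  rw [hm2, ← div_eq_mul_inv, ENNReal.le_div_iff_mul_le
    (Or.inl (Nat.cast_ne_zero.mpr (by omega))) (Or.inl (ENNReal.natCast_ne_top _)),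
    mul_comm, ← div_eq_mul_inv, ENNReal.div_le_iff_le_mul
    (Or.inl (by norm_num)) (Or.inl (by norm_num))]
  have h2 : ((2 : ℝ≥0∞)) = ((2 : ℕ) : ℝ≥0∞) := by norm_num
  rw [h2, ← Nat.cast_mul, Nat.cast_le]
  omega

/-- (Analytic comparison of series.) Let `d ≥ 1` and let `a` be a family of
nonnegative reals indexed by `ℕ^d` (positive coordinates; here index `n : Fin d → ℕ` encodes
the point `n + 1`, so `|n| = ∏ (n q + 1)`). If `∑_n a_n = ∞`, then
`∑_n |n|^{-1/2} (∑_{k ≥ n} a_k²)^{1/2} = ∞`. -/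
theorem statement15
    (d : ℕ) (hd : 1 ≤ d) (a : (Fin d → ℕ) → ℝ) (ha : ∀ n, 0 ≤ a n)
    (hdiv : (∑' n : Fin d → ℕ, ENNReal.ofReal (a n)) = ⊤) :
    (∑' n : Fin d → ℕ,
        (∑' k : {k : Fin d → ℕ // n ≤ k}, ENNReal.ofReal (a k) ^ 2) ^ ((1 : ℝ) / 2)
          / (∏ q, ((n q : ℝ≥0∞) + 1)) ^ ((1 : ℝ) / 2)) = ⊤ := by
  classical
  set b : (Fin d → ℕ) → ℝ≥0∞ := fun n => ENNReal.ofReal (a n) with hb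
  set B : (Fin d → ℕ) → Finset (Fin d → ℕ) :=
    fun n => Fintype.piFinset fun q => Finset.Icc (n q) (2 * n q + 1) with hB
  set w : (Fin d → ℕ) → ℝ≥0∞ := fun n => ∏ q, ((n q : ℝ≥0∞) + 2)⁻¹ with hw
  set Q : (Fin d → ℕ) → ℝ≥0∞ := fun n => ∏ q, ((n q : ℝ≥0∞) + 2) with hQ
  have hfac0 : ∀ (n : Fin d → ℕ) (q : Fin d), ((n q : ℝ≥0∞) + 2) ≠ 0 := by
    intro n q
    simp
  have hfact : ∀ (n : Fin d → ℕ) (q : Fin d), ((n q : ℝ≥0∞) + 2) ≠ ⊤ := by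
    intro n q
    simp [ENNReal.add_eq_top]
  have hQ0 : ∀ n, Q n ≠ 0 := by
    intro n
    rw [hQ]
    exact Finset.prod_ne_zero_iff.mpr fun q _ => hfac0 n q
  have hQt : ∀ n, Q n ≠ ⊤ := fun n => ENNReal.prod_ne_top fun q _ => hfact n q
  have hwQ : ∀ n, w n = (Q n)⁻¹ := fun n =>
    (ENNReal.prod_inv_distrib fun i _ j _ _ => Or.inl (hfac0 n i)).symm
  -- the key pointwise bound
  have key : ∀ n : Fin d → ℕ, (∑ k ∈ B n, b k) * w n ≤
      (∑' k : {k : Fin d → ℕ // n ≤ k}, b k ^ 2) ^ ((1 : ℝ) / 2)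
        / (∏ q, ((n q : ℝ≥0∞) + 1)) ^ ((1 : ℝ) / 2) := by
    intro n
    set S : ℝ≥0∞ := ∑' k : {k : Fin d → ℕ // n ≤ k}, b k ^ 2 with hS
    set P : ℝ≥0∞ := ∏ q, ((n q : ℝ≥0∞) + 1) with hP
    set r : ℝ≥0∞ := Q n ^ ((1 : ℝ) / 2) with hr
    have hr0 : r ≠ 0 := by
      rw [hr]
      simp [ENNReal.rpow_eq_zero_iff, hQ0 n, hQt n]
    have hrt : r ≠ ⊤ := ENNReal.rpow_ne_top_of_nonneg (by norm_num) (hQt n)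
    have hrr : r * r = Q n := by
      rw [hr, ← ENNReal.rpow_add _ _ (hQ0 n) (hQt n)]
      norm_num
    have hcardB : (B n).card = ∏ q, (n q + 2) := by
      rw [hB]
      rw [Fintype.card_piFinset]
      exact Finset.prod_congr rfl fun q _ => by rw [Nat.card_Icc]; omega
    have hcard : ((B n).card : ℝ≥0∞) = Q n := by
      rw [hcardB, hQ, Nat.cast_prod]
      exact Finset.prod_congr rfl fun q _ => by push_cast; ring
    have hCS : (∑ k ∈ B n, b k) ^ 2 ≤ Q n * ∑ k ∈ B n, b k ^ 2 := by
      rw [← hcard]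
      exact cs_ofReal _ a ha
    have hsub : (∑ k ∈ B n, b k ^ 2) ≤ S := by
      have hSle : S = ∑' k, Set.indicator {k : Fin d → ℕ | n ≤ k} (fun k => b k ^ 2) k := by
        rw [hS]
        exact tsum_subtype {k : Fin d → ℕ | n ≤ k} (fun k => b k ^ 2)
      rw [hSle]
      refine le_trans (le_of_eq (Finset.sum_congr rfl fun k hk => ?_)) (ENNReal.sum_le_tsum _)
      have hnk : n ≤ k := by
        intro q
        exact (Finset.mem_Icc.mp ((Fintype.mem_piFinset).mp hk q)).1
      exact (Set.indicator_of_mem hnk (fun k => b k ^ 2)).symm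
    have h1 : (∑ k ∈ B n, b k) ^ 2 ≤ Q n * S := hCS.trans (mul_le_mul_right hsub _)
    have h2 : (∑ k ∈ B n, b k) ≤ r * S ^ ((1 : ℝ) / 2) := by
      have h3 := ENNReal.rpow_le_rpow h1 (by norm_num : (0 : ℝ) ≤ 1 / 2)
      rw [ENNReal.mul_rpow_of_nonneg _ _ (by norm_num)] at h3
      have h4 : ((∑ k ∈ B n, b k) ^ 2) ^ ((1 : ℝ) / 2) = ∑ k ∈ B n, b k := by
        rw [← ENNReal.rpow_natCast (∑ k ∈ B n, b k) 2, ← ENNReal.rpow_mul]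
        norm_num
      rwa [h4] at h3
    have hPQ : P ^ ((1 : ℝ) / 2) ≤ r := by
      rw [hr]
      refine ENNReal.rpow_le_rpow ?_ (by norm_num)
      rw [hP, hQ]
      exact Finset.prod_le_prod' fun q _ => by gcongr; norm_num
    calc (∑ k ∈ B n, b k) * w n
        = (∑ k ∈ B n, b k) * (r⁻¹ * r⁻¹) := by
          rw [hwQ n, ← hrr, ENNReal.mul_inv (Or.inl hr0) (Or.inl hrt)]
      _ ≤ (r * S ^ ((1 : ℝ) / 2)) * (r⁻¹ * r⁻¹) := mul_le_mul_left h2 _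
      _ = S ^ ((1 : ℝ) / 2) * r⁻¹ := by
          rw [show r * S ^ ((1 : ℝ) / 2) * (r⁻¹ * r⁻¹)
              = (r * r⁻¹) * (S ^ ((1 : ℝ) / 2) * r⁻¹) from by ring,
            ENNReal.mul_inv_cancel hr0 hrt, one_mul]
      _ = S ^ ((1 : ℝ) / 2) / r := (div_eq_mul_inv _ _).symm
      _ ≤ S ^ ((1 : ℝ) / 2) / P ^ ((1 : ℝ) / 2) := ENNReal.div_le_div_left hPQ _
  -- rewrite each lower-bound term as a tsum of indicators
  have hterm : ∀ n : Fin d → ℕ, (∑ k ∈ B n, b k) * w n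
      = ∑' k : Fin d → ℕ, Set.indicator (↑(B n) : Set (Fin d → ℕ)) (fun k => b k * w n) k := by
    intro n
    rw [← tsum_subtype (↑(B n) : Set (Fin d → ℕ)) (fun k => b k * w n)]
    rw [show (∑' k : (↑(B n) : Set (Fin d → ℕ)), b ↑k * w n)
        = ∑ k ∈ B n, b k * w n from Finset.tsum_subtype (B n) (fun k => b k * w n)]
    rw [Finset.sum_mul]
  -- lower bound for the swapped sum, for fixed k
  have hlower : ∀ k : Fin d → ℕ, b k * ((2 : ℝ≥0∞)⁻¹) ^ d ≤
      ∑' n : Fin d → ℕ, Set.indicator (↑(B n) : Set (Fin d → ℕ)) (fun k => b k * w n) k := by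
    intro k
    set B' : Finset (Fin d → ℕ) := Fintype.piFinset fun q => Finset.Icc (k q / 2) (k q) with hB'
    have hmem : ∀ n ∈ B', k ∈ B n := by
      intro n hn
      rw [hB', Fintype.mem_piFinset] at hn
      rw [hB, Fintype.mem_piFinset]
      intro q
      have := Finset.mem_Icc.mp (hn q)
      rw [Finset.mem_Icc]
      omega
    have hWsum : ((2 : ℝ≥0∞)⁻¹) ^ d ≤ ∑ n ∈ B', w n := by
      have hps : (∑ n ∈ B', w n)
          = ∏ q, ∑ j ∈ Finset.Icc (k q / 2) (k q), ((j : ℝ≥0∞) + 2)⁻¹ := by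
        simp only [hB', hw]
        exact (Finset.prod_univ_sum (fun q => Finset.Icc (k q / 2) (k q))
          (fun q j => ((j : ℝ≥0∞) + 2)⁻¹)).symm
      rw [hps]
      calc ((2 : ℝ≥0∞)⁻¹) ^ d = ∏ _q : Fin d, (2 : ℝ≥0∞)⁻¹ := by
            rw [Finset.prod_const, Finset.card_univ, Fintype.card_fin]
        _ ≤ _ := Finset.prod_le_prod' fun q _ => coord_bound (k q)
    calc b k * ((2 : ℝ≥0∞)⁻¹) ^ d ≤ b k * ∑ n ∈ B', w n := mul_le_mul_right hWsum _
      _ = ∑ n ∈ B', b k * w n := Finset.mul_sum _ _ _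
      _ = ∑ n ∈ B', Set.indicator (↑(B n) : Set (Fin d → ℕ)) (fun k => b k * w n) k :=
          Finset.sum_congr rfl fun n hn => (Set.indicator_of_mem (s := (↑(B n) : Set (Fin d → ℕ))) (Finset.mem_coe.mpr (hmem n hn)) (fun k => b k * w n)).symm
      _ ≤ _ := ENNReal.sum_le_tsum _
  -- put everything together
  have hc0 : ((2 : ℝ≥0∞)⁻¹) ^ d ≠ 0 := pow_ne_zero _ (ENNReal.inv_ne_zero.mpr (by norm_num))
  have htop : (⊤ : ℝ≥0∞) ≤ ∑' n : Fin d → ℕ,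
      (∑' k : {k : Fin d → ℕ // n ≤ k}, b k ^ 2) ^ ((1 : ℝ) / 2)
        / (∏ q, ((n q : ℝ≥0∞) + 1)) ^ ((1 : ℝ) / 2) := by
    calc (⊤ : ℝ≥0∞) = (∑' n : Fin d → ℕ, b n) * ((2 : ℝ≥0∞)⁻¹) ^ d := by
          rw [hdiv, ENNReal.top_mul hc0]
      _ = ∑' k : Fin d → ℕ, b k * ((2 : ℝ≥0∞)⁻¹) ^ d := ENNReal.tsum_mul_right.symm
      _ ≤ ∑' k : Fin d → ℕ, ∑' n : Fin d → ℕ,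
            Set.indicator (↑(B n) : Set (Fin d → ℕ)) (fun k => b k * w n) k :=
          ENNReal.tsum_le_tsum hlower
      _ = ∑' n : Fin d → ℕ, ∑' k : Fin d → ℕ,
            Set.indicator (↑(B n) : Set (Fin d → ℕ)) (fun k => b k * w n) k :=
          ENNReal.tsum_comm
      _ = ∑' n : Fin d → ℕ, (∑ k ∈ B n, b k) * w n := tsum_congr fun n => (hterm n).symm
      _ ≤ _ := ENNReal.tsum_le_tsum key
  exact top_le_iff.mp htop
end

section
/- (A martingale difference violating Wu's condition, d = 1.) Let (ε_i)_{i∈Z} be i.i.d. with P(ε_0 = 1) = P(ε_0 = −1) = 1/2 on (Ω,F,P) = ({−1,1}^Z, product σ-algebra, product measure), and let F_k = σ(ε_j : j ≤ k). For measurable f : {−1,1}^Z → R and i ∈ Z define the physical dependence measure δ_i(f) = ‖f(ε) − f(ε^{*i})‖₂, where ε^{*i} agrees with ε in every coordinate except coordinate i, which is replaced by an independent copy ε_i^* of ε_i. Then there exists f ∈ L²(P) which is F_0-measurable and satisfies E(f | F_{−1}) = 0 a.s. (so that {f∘T_k}_{k∈Z}, T the shift, is a stationary martingale difference sequence), but Σ_{i∈Z}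 δ_i(f) = ∞. -/
/-!
Let `τ ≥ 1` be the number of steps back from time `0` to the first `-1` of `ε`, so that
`P(τ = n) = 2⁻ⁿ`, and put `f = w(τ) ε₀` with `w(n) = 2^{n/2} / n` for even `n` and `w(n) = 0` for
odd `n`. As `w(τ)` is `F_{-1}`-measurable and `ε₀` is centred and independent of `F_{-1}`, `f` is a
martingale difference, and `E f² = ∑ w(n)² 2⁻ⁿ ≤ ∑ 1 / n² < ∞`. For even `n`, on the event
`{τ = n, ε_{-n-1} = -1}` resampling `ε_{-n}` to `+1` turns `τ` into the odd value `n + 1` and so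
kills `f`; this happens with probability `2⁻ⁿ⁻²`, whence `δ_{-n}(f)² ≥ w(n)² 2⁻ⁿ⁻² = 1 / (4 n²)`, and
the harmonic series `∑ δ_{-n}(f)` over even `n` diverges.
-/

open MeasureTheory ProbabilityTheory Filter
open scoped ENNReal NNReal

noncomputable section

/-- The σ-algebra `F_k = σ(ε_j : j ≤ k)` on `{−1,1}^ℤ ⊆ ℝ^ℤ`. -/
def radF (k : ℤ) : MeasurableSpace (ℤ → ℝ) :=
  ⨆ j : ℤ, ⨆ _ : j ≤ k, MeasurableSpace.comap (fun ω => ω j) inferInstance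

/-- The coordinates of `P` are i.i.d. Rademacher: `P(ε_i = 1) = P(ε_i = −1) = 1/2`. -/
def IsRademacherMeasure (P : Measure (ℤ → ℝ)) : Prop :=
  IsProbabilityMeasure P ∧
    iIndepFun (m := fun _ : ℤ => (inferInstance : MeasurableSpace ℝ)) (fun i ω => ω i) P ∧
    ∀ i : ℤ, P.map (fun ω => ω i)
      = (2⁻¹ : ℝ≥0∞) • Measure.dirac (1 : ℝ) + (2⁻¹ : ℝ≥0∞) • Measure.dirac (-1 : ℝ)

/-- The physical dependence measure `δ_i(f) = ‖f(ε) − f(ε^{*i})‖₂`, computed on the enlarged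
space `Ω × Ω` carrying `(ε, ε^*)` with law `P ⊗ P`; `ε^{*i}` is `ε` with coordinate `i`
replaced by `ε_i^*`. -/
def physDelta (P : Measure (ℤ → ℝ)) (i : ℤ) (f : (ℤ → ℝ) → ℝ) : ℝ≥0∞ :=
  eLpNorm (fun p : (ℤ → ℝ) × (ℤ → ℝ) => f p.1 - f (Function.update p.1 i (p.2 i))) 2
    (P.prod P)

end

theorem MeasureTheory.lintegral_comp_eq_tsum {Ω α : Type*} [MeasurableSpace Ω] [MeasurableSpace α]
    [Countable α] [MeasurableSingletonClass α] {μ : Measure Ω} {N : Ω → α} (hN : Measurable N)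
    (g : α → ℝ≥0∞) : ∫⁻ ω, g (N ω) ∂μ = ∑' a, g a * μ (N ⁻¹' {a}) := by
  rw [← lintegral_map (measurable_of_countable g) hN, lintegral_countable']
  simp_rw [Measure.map_apply hN (measurableSet_singleton _)]

theorem MeasureTheory.condExp_mul_eq_zero_of_indep {Ω : Type*} {m m' mΩ : MeasurableSpace Ω}
    {μ : Measure Ω} {X Y : Ω → ℝ} (hm : m ≤ mΩ) (hm' : m' ≤ mΩ) [SigmaFinite (μ.trim hm)]
    (hX : StronglyMeasurable[m] X) (hY : StronglyMeasurable[m'] Y) (hindep : Indep m' m μ)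
    (hXY : Integrable (X * Y) μ) (hYint : Integrable Y μ) (hY0 : μ[Y] = 0) :
    μ[X * Y | m] =ᵐ[μ] 0 := by
  filter_upwards [condExp_mul_of_stronglyMeasurable_left hX hXY hYint,
    condExp_indep_eq hm' hm hY hindep] with ω h1 h2
  simp [h1, h2, hY0]

theorem MeasureTheory.mul_measure_le_eLpNorm_pow {α E : Type*} [MeasurableSpace α]
    [NormedAddCommGroup E] {μ : Measure α} {f : α → E} {p : ℝ≥0∞} (hp0 : p ≠ 0) (hptop : p ≠ ∞)
    (hf : AEStronglyMeasurable f μ) {s : Set α} {c : ℝ≥0∞} (hc : ∀ x ∈ s, c ≤ ‖f x‖ₑ) :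
    c ^ p.toReal * μ s ≤ eLpNorm f p μ ^ p.toReal :=
  (mul_le_mul_right (measure_mono hc) _).trans (mul_meas_ge_le_pow_eLpNorm' μ hp0 hptop hf c)

theorem ENNReal.tsum_ofReal_eq_top_of_not_summable {α : Type*} {f : α → ℝ} (hf0 : ∀ a, 0 ≤ f a)
    (hf : ¬Summable f) : ∑' a, ENNReal.ofReal (f a) = ⊤ := by
  by_contra h
  exact hf ((NNReal.summable_coe.mpr (ENNReal.tsum_coe_ne_top_iff_summable.mp h)).congr
    fun a => Real.coe_toNNReal _ (hf0 a))

theorem ENNReal.inv_two_pow_eq_ofReal (n : ℕ) : (2⁻¹ : ℝ≥0∞) ^ n = ENNReal.ofReal (2⁻¹ ^ n) := by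
  simp [ENNReal.ofReal_pow, ENNReal.ofReal_inv_of_pos, ENNReal.inv_pow]

def signCylinder (S A : Finset ℤ) : Set (ℤ → ℝ) := {ω | ∀ k ∈ S, (ω k = -1 ↔ k ∈ A)}

lemma signCylinder_eq_biInter (S A : Finset ℤ) :
    signCylinder S A = ⋂ k ∈ S, (fun ω : ℤ → ℝ => ω k) ⁻¹' (if k ∈ A then {-1} else {-1}ᶜ) := by
  ext ω
  simp only [signCylinder, Set.mem_ofPred_eq, Set.mem_iInter, Set.mem_preimage]
  refine forall₂_congr fun k _ => ?_
  split_ifs with hk <;> simp [hk]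

namespace IsRademacherMeasure

variable {P : Measure (ℤ → ℝ)} (hP : IsRademacherMeasure P) (j : ℤ)
include hP

lemma measure_coord_mem {s : Set ℝ} (hs : MeasurableSet s) :
    P {ω | ω j ∈ s} = 2⁻¹ * s.indicator 1 1 + 2⁻¹ * s.indicator 1 (-1) := by
  rw [← Set.preimage_ofPred_eq (p := (· ∈ s)), ← Measure.map_apply (measurable_pi_apply j) hs,
    hP.2.2 j]
  simp [Measure.dirac_apply' _ hs]

lemma measure_coord_eq_neg_one : P {ω | ω j = -1} = 2⁻¹ := by
  simpa [Set.indicator_apply, show (1 : ℝ) ≠ -1 by norm_num] using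
    hP.measure_coord_mem j (measurableSet_singleton (-1))

lemma measure_coord_ne_neg_one : P {ω | ω j ≠ -1} = 2⁻¹ := by
  simpa [Set.indicator_apply, show (1 : ℝ) ≠ -1 by norm_num] using
    hP.measure_coord_mem j (measurableSet_singleton (-1)).compl

lemma ae_coord_eq_one_or_neg_one : ∀ᵐ ω ∂P, ω j = 1 ∨ ω j = -1 := by
  rw [ae_iff]
  simpa [Set.indicator_apply, show (1 : ℝ) ≠ -1 by norm_num] using
    hP.measure_coord_mem j (s := {1, -1}ᶜ) (by measurability)

lemma integrable_coord : Integrable (fun ω : ℤ → ℝ => ω j) P := by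
  have := hP.1
  refine (integrable_const (1 : ℝ)).mono' (measurable_pi_apply j).aestronglyMeasurable ?_
  filter_upwards [hP.ae_coord_eq_one_or_neg_one j] with ω hω
  rcases hω with h | h <;> simp [h]

lemma integral_coord : ∫ ω, ω j ∂P = 0 := by
  have hint (a : ℝ) : Integrable id ((2⁻¹ : ℝ≥0∞) • Measure.dirac a) :=
    (integrable_dirac enorm_lt_top).smul_measure (by norm_num)
  have hj : Measurable fun ω : ℤ → ℝ => ω j := measurable_pi_apply j
  change ∫ ω, id (ω j) ∂P = 0
  rw [← integral_map hj.aemeasurable aestronglyMeasurable_id, hP.2.2 j,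
    integral_add_measure (hint 1) (hint (-1))]
  simp

lemma measure_signCylinder (S A : Finset ℤ) : P (signCylinder S A) = 2⁻¹ ^ S.card := by
  rw [signCylinder_eq_biInter, hP.2.1.measure_inter_preimage_eq_mul S, Finset.prod_eq_pow_card]
  · intro k _
    split_ifs
    exacts [hP.measure_coord_eq_neg_one k, hP.measure_coord_ne_neg_one k]
  · intro k _
    split_ifs
    exacts [measurableSet_singleton _, (measurableSet_singleton _).compl]

lemma indep_coord_radF {k : ℤ} (hkj : k < j) :
    Indep (MeasurableSpace.comap (fun ω : ℤ → ℝ => ω j) inferInstance) (radF k) P := by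
  have := hP.1
  have h := indep_iSup_of_disjoint (fun i => (measurable_pi_apply i).comap_le) hP.2.1.iIndep
    (S := {j}) (T := Set.Iic k) (by simpa using hkj)
  rwa [iSup_singleton] at h

end IsRademacherMeasure

lemma radF_le_pi (k : ℤ) : radF k ≤ MeasurableSpace.pi :=
  iSup₂_le fun j _ => (measurable_pi_apply j).comap_le

lemma radF_mono : Monotone radF :=
  fun _ _ hkl => iSup₂_le fun j hj => le_iSup₂_of_le j (hj.trans hkl) le_rfl

lemma measurable_coord_radF {k j : ℤ} (hj : j ≤ k) : Measurable[radF k] fun ω : ℤ → ℝ => ω j :=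
  Measurable.of_comap_le (le_iSup₂_of_le j hj le_rfl)

lemma measurableSet_signCylinder_radF {l : ℤ} {S : Finset ℤ} (A : Finset ℤ)
    (hS : ∀ k ∈ S, k ≤ l) : MeasurableSet[radF l] (signCylinder S A) := by
  rw [signCylinder_eq_biInter]
  refine Finset.measurableSet_biInter S fun k hk => measurable_coord_radF (hS k hk) ?_
  split_ifs
  exacts [measurableSet_singleton _, (measurableSet_singleton _).compl]

/-- The least `n ≥ 1` with `ω (-n) = -1`, and `0` (the value of `sInf ∅`) if there is none. -/
noncomputable def negLag (ω : ℤ → ℝ) : ℕ := sInf {n : ℕ | 0 < n ∧ ω (-n) = -1}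

lemma negLag_eq_zero_iff {ω : ℤ → ℝ} : negLag ω = 0 ↔ ∀ n : ℕ, 0 < n → ω (-n) ≠ -1 := by
  simp [negLag, Nat.sInf_eq_zero, Set.eq_empty_iff_forall_notMem]

lemma negLag_eq_iff {ω : ℤ → ℝ} {n : ℕ} (hn : 0 < n) :
    negLag ω = n ↔ ω (-n) = -1 ∧ ∀ k : ℤ, -n < k → k < 0 → ω k ≠ -1 := by
  constructor
  · rintro rfl
    have hmem : negLag ω ∈ {n : ℕ | 0 < n ∧ ω (-n) = -1} := Nat.sInf_mem (by
      by_contra h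
      simp [negLag, Set.not_nonempty_iff_eq_empty.mp h] at hn)
    refine ⟨hmem.2, fun k hk1 hk2 hk => ?_⟩
    have : negLag ω ≤ k.natAbs :=
      Nat.sInf_le ⟨by omega, by rwa [show -(k.natAbs : ℤ) = k by omega]⟩
    omega
  · rintro ⟨h1, h2⟩
    refine le_antisymm (Nat.sInf_le ⟨hn, h1⟩) (le_of_not_gt fun hlt => ?_)
    have hmem : negLag ω ∈ {n : ℕ | 0 < n ∧ ω (-n) = -1} := Nat.sInf_mem ⟨n, hn, h1⟩
    exact h2 (-(negLag ω : ℤ)) (by omega) (by have := hmem.1; omega) hmem.2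

lemma negLag_preimage_singleton {n : ℕ} (hn : 0 < n) :
    negLag ⁻¹' {n} = signCylinder (Finset.Icc (-n : ℤ) (-1)) {-(n : ℤ)} := by
  ext ω
  simp only [Set.mem_preimage, Set.mem_singleton_iff, negLag_eq_iff hn, signCylinder,
    Set.mem_ofPred_eq, Finset.mem_Icc, Finset.mem_singleton]
  constructor
  · rintro ⟨h1, h2⟩ k hk
    rcases eq_or_ne k (-n) with rfl | hne
    · simp [h1]
    · simp [hne, h2 k (by omega) (by omega)]
  · intro h
    exact ⟨(h _ (by omega)).2 rfl, fun k hk1 hk2 hk => absurd ((h k (by omega)).1 hk) (by omega)⟩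

lemma negLag_eq_of_mem_signCylinder {ω : ℤ → ℝ} {n : ℕ} (hn : 0 < n)
    (hω : ω ∈ signCylinder (Finset.Icc (-((n : ℤ) + 1)) 0) {-((n : ℤ) + 1), -(n : ℤ), 0}) :
    negLag ω = n ∧ ω (-((n : ℤ) + 1)) = -1 ∧ ω 0 = -1 := by
  simp only [signCylinder, Set.mem_ofPred_eq, Finset.mem_Icc, Finset.mem_insert,
    Finset.mem_singleton] at hω
  refine ⟨(negLag_eq_iff hn).mpr ⟨(hω _ (by omega)).2 (by omega), fun k hk1 hk2 hk => ?_⟩,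
    (hω _ (by omega)).2 (by omega), (hω _ (by omega)).2 (by omega)⟩
  have := (hω k (by omega)).1 hk
  omega

lemma negLag_update {ω : ℤ → ℝ} {n : ℕ} (hn : 0 < n) (hω : negLag ω = n)
    (hnext : ω (-((n : ℤ) + 1)) = -1) {x : ℝ} (hx : x ≠ -1) :
    negLag (Function.update ω (-n) x) = n + 1 := by
  rw [negLag_eq_iff hn] at hω
  rw [negLag_eq_iff n.succ_pos]
  push_cast
  refine ⟨by rwa [Function.update_of_ne (by omega)], fun k hk1 hk2 => ?_⟩
  rcases eq_or_ne k (-n) with rfl | hk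
  · rwa [Function.update_self]
  · rw [Function.update_of_ne hk]
    exact hω.2 k (by omega) hk2

lemma measurable_negLag : Measurable[radF (-1)] negLag := by
  refine @measurable_to_countable' _ _ _ _ (radF (-1)) _ fun n => ?_
  rcases Nat.eq_zero_or_pos n with rfl | hn
  · have h : negLag ⁻¹' {0} = ⋂ n : ℕ, ⋂ _ : 0 < n, {ω : ℤ → ℝ | ω (-n) = -1}ᶜ := by
      ext ω
      simp [negLag_eq_zero_iff]
    rw [h]
    exact .iInter fun n => .iInter fun hn =>
      (measurable_coord_radF (by omega) (measurableSet_singleton _)).compl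
  · rw [negLag_preimage_singleton hn]
    exact measurableSet_signCylinder_radF _ fun k hk => (Finset.mem_Icc.mp hk).2

lemma IsRademacherMeasure.measure_negLag_eq {P : Measure (ℤ → ℝ)} (hP : IsRademacherMeasure P)
    {n : ℕ} (hn : 0 < n) : P (negLag ⁻¹' {n}) = 2⁻¹ ^ n := by
  rw [negLag_preimage_singleton hn, hP.measure_signCylinder]
  simp

noncomputable def lagWeight (n : ℕ) : ℝ := if Even n then 2 ^ (n / 2) / n else 0

lemma lagWeight_nonneg (n : ℕ) : 0 ≤ lagWeight n := by
  unfold lagWeight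
  split_ifs <;> positivity

lemma lagWeight_of_odd {n : ℕ} (hn : Odd n) : lagWeight n = 0 := by
  simp [lagWeight, Nat.not_even_iff_odd.mpr hn]

lemma lagWeight_sq_mul_inv_two_pow_of_even {n : ℕ} (hn : Even n) :
    lagWeight n ^ 2 * 2⁻¹ ^ n = 1 / (n : ℝ) ^ 2 := by
  obtain ⟨m, rfl⟩ := hn
  rw [lagWeight, if_pos ⟨m, rfl⟩, show (m + m) / 2 = m by omega, div_pow, ← pow_mul, inv_pow,
    show m * 2 = m + m by ring]
  field_simp

lemma lagWeight_sq_mul_inv_two_pow_le (n : ℕ) : lagWeight n ^ 2 * 2⁻¹ ^ n ≤ 1 / (n : ℝ) ^ 2 := by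
  rcases Nat.even_or_odd n with hn | hn
  · exact (lagWeight_sq_mul_inv_two_pow_of_even hn).le
  · rw [lagWeight_of_odd hn, zero_pow two_ne_zero, zero_mul]
    positivity

lemma inv_four_mul_sq_le_lagWeight_sq_mul {n : ℕ} (hn : Even n) (hn0 : 0 < n) :
    ((4 * n : ℝ)⁻¹) ^ 2 ≤ lagWeight n ^ 2 * 2⁻¹ ^ (n + 3) := by
  rw [pow_add, ← mul_assoc, lagWeight_sq_mul_inv_two_pow_of_even hn]
  have : (0 : ℝ) < n := by exact_mod_cast hn0
  field_simp
  norm_num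

lemma not_summable_inv_four_mul_even :
    ¬Summable fun m : ℕ => (4 * ((2 * m + 2 : ℕ) : ℝ))⁻¹ := by
  have h : ¬Summable fun m : ℕ => ((m + 1 : ℕ) : ℝ)⁻¹ :=
    (summable_nat_add_iff 1).not.mpr Real.not_summable_natCast_inv
  refine fun hs => h ((hs.mul_left 8).congr fun m => ?_)
  push_cast
  field_simp
  ring

noncomputable def wuCounterexample (ω : ℤ → ℝ) : ℝ := lagWeight (negLag ω) * ω 0

lemma measurable_lagWeight_negLag : Measurable[radF (-1)] fun ω => lagWeight (negLag ω) :=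
  (measurable_from_top (f := lagWeight)).comp measurable_negLag

lemma measurable_wuCounterexample_radF : Measurable[radF 0] wuCounterexample :=
  (measurable_lagWeight_negLag.mono (radF_mono (by norm_num)) le_rfl).mul
    (measurable_coord_radF le_rfl)

@[fun_prop]
lemma measurable_wuCounterexample : Measurable wuCounterexample :=
  measurable_wuCounterexample_radF.mono (radF_le_pi 0) le_rfl

lemma enorm_wuCounterexample_sub_update {n : ℕ} (hn : Even n) (hn0 : 0 < n) {ω ω' : ℤ → ℝ}
    (hω : ω ∈ signCylinder (Finset.Icc (-((n : ℤ) + 1)) 0) {-((n : ℤ) + 1), -(n : ℤ), 0})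
    (hω' : ω' (-n) ≠ -1) :
    ‖wuCounterexample ω - wuCounterexample (Function.update ω (-n) (ω' (-n)))‖ₑ =
      ‖lagWeight n‖ₑ := by
  obtain ⟨hlag, hnext, h0⟩ := negLag_eq_of_mem_signCylinder hn0 hω
  rw [wuCounterexample, wuCounterexample, negLag_update hn0 hlag hnext hω', hlag,
    lagWeight_of_odd hn.add_one, h0]
  simp

namespace IsRademacherMeasure

variable {P : Measure (ℤ → ℝ)} (hP : IsRademacherMeasure P)
include hP

lemma memLp_lagWeight_negLag : MemLp (fun ω => lagWeight (negLag ω)) 2 P := by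
  have hmeas := measurable_lagWeight_negLag.mono (radF_le_pi _) le_rfl
  have hNmeas := measurable_negLag.mono (radF_le_pi _) le_rfl
  have hterm (n : ℕ) : ENNReal.ofReal (lagWeight n ^ 2) * P (negLag ⁻¹' {n}) ≤
      ENNReal.ofReal (1 / (n : ℝ) ^ 2) := by
    rcases Nat.eq_zero_or_pos n with rfl | hn
    · simp [lagWeight]
    · rw [hP.measure_negLag_eq hn, ENNReal.inv_two_pow_eq_ofReal,
        ← ENNReal.ofReal_mul (sq_nonneg _)]
      exact ENNReal.ofReal_le_ofReal (lagWeight_sq_mul_inv_two_pow_le n)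
  rw [memLp_two_iff_integrable_sq hmeas.aestronglyMeasurable]
  refine ⟨(hmeas.pow_const 2).aestronglyMeasurable, ?_⟩
  rw [hasFiniteIntegral_iff_ofReal (.of_forall fun ω => sq_nonneg _),
    lintegral_comp_eq_tsum hNmeas (fun n => ENNReal.ofReal (lagWeight n ^ 2))]
  exact (ENNReal.tsum_le_tsum hterm).trans_lt
    (Real.summable_one_div_nat_pow.mpr one_lt_two).tsum_ofReal_lt_top

lemma memLp_wuCounterexample : MemLp wuCounterexample 2 P := by
  refine hP.memLp_lagWeight_negLag.of_le
    measurable_wuCounterexample.aestronglyMeasurable ?_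
  filter_upwards [hP.ae_coord_eq_one_or_neg_one 0] with ω hω
  rcases hω with h | h <;> simp [wuCounterexample, h]

lemma condExp_wuCounterexample : P[wuCounterexample | radF (-1)] =ᵐ[P] 0 := by
  have := hP.1
  exact condExp_mul_eq_zero_of_indep (radF_le_pi _) (measurable_pi_apply 0).comap_le
    measurable_lagWeight_negLag.stronglyMeasurable (comap_measurable _).stronglyMeasurable
    (hP.indep_coord_radF 0 (by norm_num)) (hP.memLp_wuCounterexample.integrable one_le_two)
    (hP.integrable_coord 0) (hP.integral_coord 0)

lemma le_physDelta_wuCounterexample {n : ℕ} (hn : Even n) (hn0 : 0 < n) :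
    ENNReal.ofReal (4 * n)⁻¹ ≤ physDelta P (-n) wuCounterexample := by
  have := hP.1
  have hcheb := mul_measure_le_eLpNorm_pow two_ne_zero ENNReal.ofNat_ne_top
    (μ := P.prod P) (by fun_prop)
    (s := signCylinder (Finset.Icc (-((n : ℤ) + 1)) 0) {-((n : ℤ) + 1), -(n : ℤ), 0} ×ˢ
      {ω' : ℤ → ℝ | ω' (-n) ≠ -1})
    fun p hp => (enorm_wuCounterexample_sub_update hn hn0 hp.1 (ω' := p.2) hp.2).ge
  have hcard : (Finset.Icc (-((n : ℤ) + 1)) 0).card = n + 2 := by simp; omega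
  rw [Measure.prod_prod, hP.measure_signCylinder, hP.measure_coord_ne_neg_one, hcard,
    ENNReal.toReal_ofNat, ENNReal.rpow_two, ENNReal.rpow_two,
    Real.enorm_of_nonneg (lagWeight_nonneg n), ← pow_succ] at hcheb
  refine (ENNReal.pow_le_pow_left_iff two_ne_zero).mp (le_trans ?_ hcheb)
  rw [ENNReal.inv_two_pow_eq_ofReal, ← ENNReal.ofReal_pow (by positivity),
    ← ENNReal.ofReal_pow (lagWeight_nonneg n), ← ENNReal.ofReal_mul (by positivity)]
  exact ENNReal.ofReal_le_ofReal (inv_four_mul_sq_le_lagWeight_sq_mul hn hn0)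

end IsRademacherMeasure

/-- (A martingale difference violating Wu's condition, `d = 1`.) For i.i.d.
Rademacher coordinates, there exists `f ∈ L²(P)` which is `F_0`-measurable and satisfies
`E(f | F_{−1}) = 0` a.s., but whose physical dependence measures satisfy `∑_{i∈ℤ} δ_i(f) = ∞`. -/
theorem statement17
    (P : Measure (ℤ → ℝ)) (hP : IsRademacherMeasure P) :
    ∃ f : (ℤ → ℝ) → ℝ, MemLp f 2 P ∧ Measurable[radF 0] f ∧
      (P[f | radF (-1)] =ᵐ[P] 0) ∧
      (∑' i : ℤ, physDelta P i f) = ⊤ := by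
  refine ⟨wuCounterexample, hP.memLp_wuCounterexample, measurable_wuCounterexample_radF,
    hP.condExp_wuCounterexample, top_unique ?_⟩
  have hinj : Function.Injective fun m : ℕ => -((2 * m + 2 : ℕ) : ℤ) := fun a b h => by
    simp only [neg_inj, Nat.cast_inj] at h
    omega
  calc ⊤ = ∑' m : ℕ, ENNReal.ofReal (4 * ((2 * m + 2 : ℕ) : ℝ))⁻¹ :=
        (ENNReal.tsum_ofReal_eq_top_of_not_summable (fun m => by positivity)
          not_summable_inv_four_mul_even).symm
    _ ≤ ∑' m : ℕ, physDelta P (-((2 * m + 2 : ℕ) : ℤ)) wuCounterexample :=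
        ENNReal.tsum_le_tsum fun m =>
          hP.le_physDelta_wuCounterexample ⟨m + 1, by ring⟩ (by omega)
    _ ≤ ∑' i : ℤ, physDelta P i wuCounterexample :=
        ENNReal.tsum_comp_le_tsum_of_injective hinj _
end
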